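/- arXiv:1408.0549 — 6 statements merged into one kernel-verified Lean document; each statement's English description precedes it below -/
import Mathlib

section
/- Let Φ be a finite set of points in ℝ² \ {0} with positive marks (fading gains) h_x > 0, and let x* be a point of Φ with minimal norm. If h_{x*}‖x*‖^{-α₀} > T · Σ_{y∈Φ\{x*}} h_y ‖y‖^{-α₀} for some T > 0, then h_{x*} l₂(x*) ≥ T · Σ_{y∈Φ\{x*}} h_y l₂(y), where l₂ is the dual-slope path loss with exponents 0 ≤ α₀ ≤ α₁ and critical distance R_c. (SIR under the dual-slope law is at least the SIR under the near-field single-slope law.) -/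
/-! The dual-slope law is the single-slope law `r ^ (-α₀)` damped by the factor
`min 1 ((Rc / r) ^ (α₁ - α₀))`, which is nonincreasing in `r`. Passing from `r ^ (-α₀)` to the
dual-slope law therefore scales every interferer, all at distance at least `‖x*‖`, by at most
the factor applied to the serving point `x*`, so the SIR can only increase. -/

open Real
open scoped Classical

noncomputable def dualSlope (Rc α₀ α₁ r : ℝ) : ℝ :=
  if r ≤ Rc then r ^ (-α₀) else Rc ^ (α₁ - α₀) * r ^ (-α₁)

lemma dualSlope_eq_rpow_mul_min {Rc α₀ α₁ r : ℝ} (hRc : 0 < Rc) (hα : α₀ ≤ α₁) (hr : 0 < r) :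
    dualSlope Rc α₀ α₁ r = r ^ (-α₀) * min 1 ((Rc / r) ^ (α₁ - α₀)) := by
  have he : 0 ≤ α₁ - α₀ := sub_nonneg.mpr hα
  unfold dualSlope
  split_ifs with hrRc
  · rw [min_eq_left (one_le_rpow ((one_le_div hr).mpr hrRc) he), mul_one]
  · rw [not_le] at hrRc
    rw [min_eq_right (rpow_le_one (by positivity) ((div_le_one hr).mpr hrRc.le) he),
      div_rpow hRc.le hr.le, mul_div_left_comm, ← rpow_sub hr]
    ring_nf

lemma rpow_mul_dualSlope_le {Rc α₀ α₁ s r : ℝ} (hRc : 0 < Rc) (hα : α₀ ≤ α₁) (hs : 0 < s)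
    (hsr : s ≤ r) :
    s ^ (-α₀) * dualSlope Rc α₀ α₁ r ≤ dualSlope Rc α₀ α₁ s * r ^ (-α₀) := by
  have hr : 0 < r := hs.trans_le hsr
  have hmin : min 1 ((Rc / r) ^ (α₁ - α₀)) ≤ min 1 ((Rc / s) ^ (α₁ - α₀)) := by gcongr
  rw [dualSlope_eq_rpow_mul_min hRc hα hr, dualSlope_eq_rpow_mul_min hRc hα hs]
  calc s ^ (-α₀) * (r ^ (-α₀) * min 1 ((Rc / r) ^ (α₁ - α₀)))
      = s ^ (-α₀) * r ^ (-α₀) * min 1 ((Rc / r) ^ (α₁ - α₀)) := by ring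
    _ ≤ s ^ (-α₀) * r ^ (-α₀) * min 1 ((Rc / s) ^ (α₁ - α₀)) := by gcongr
    _ = s ^ (-α₀) * min 1 ((Rc / s) ^ (α₁ - α₀)) * r ^ (-α₀) := by ring

theorem mul_sum_le_of_ratio_le {ι : Type*} (s : Finset ι) (w f g : ι → ℝ) {c f₀ g₀ T : ℝ}
    (hf₀ : 0 < f₀) (hg₀ : 0 ≤ g₀) (hT : 0 ≤ T) (hw : ∀ i ∈ s, 0 ≤ w i)
    (hratio : ∀ i ∈ s, f₀ * g i ≤ g₀ * f i) (hf : T * ∑ i ∈ s, w i * f i ≤ c * f₀) :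
    T * ∑ i ∈ s, w i * g i ≤ c * g₀ := by
  refine le_of_mul_le_mul_left ?_ hf₀
  calc f₀ * (T * ∑ i ∈ s, w i * g i) = T * ∑ i ∈ s, w i * (f₀ * g i) := by
        rw [Finset.mul_sum, Finset.mul_sum, Finset.mul_sum]; congr 1; ext; ring
    _ ≤ T * ∑ i ∈ s, w i * (g₀ * f i) := by
        gcongr T * ?_
        exact Finset.sum_le_sum fun i hi ↦ mul_le_mul_of_nonneg_left (hratio i hi) (hw i hi)
    _ = g₀ * (T * ∑ i ∈ s, w i * f i) := by
        rw [Finset.mul_sum, Finset.mul_sum, Finset.mul_sum]; congr 1; ext; ring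
    _ ≤ g₀ * (c * f₀) := by gcongr
    _ = f₀ * (c * g₀) := by ring

theorem stmt_4_general (Rc α₀ α₁ T : ℝ) (hRc : 0 < Rc) (hα : α₀ ≤ α₁) (hT : 0 < T)
    (Φ : Finset (EuclideanSpace ℝ (Fin 2))) (hΦ : ∀ y ∈ Φ, y ≠ 0)
    (h : EuclideanSpace ℝ (Fin 2) → ℝ) (hh : ∀ y ∈ Φ, 0 < h y)
    (xs : EuclideanSpace ℝ (Fin 2)) (hxs : xs ∈ Φ) (hmin : ∀ y ∈ Φ, ‖xs‖ ≤ ‖y‖)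
    (hSIR : h xs * ‖xs‖ ^ (-α₀) > T * ∑ y ∈ Φ.erase xs, h y * ‖y‖ ^ (-α₀)) :
    h xs * dualSlope Rc α₀ α₁ ‖xs‖ ≥
      T * ∑ y ∈ Φ.erase xs, h y * dualSlope Rc α₀ α₁ ‖y‖ := by
  have hxs0 : 0 < ‖xs‖ := norm_pos_iff.mpr (hΦ xs hxs)
  refine mul_sum_le_of_ratio_le _ h (fun y ↦ ‖y‖ ^ (-α₀)) (fun y ↦ dualSlope Rc α₀ α₁ ‖y‖)
    (rpow_pos_of_pos hxs0 _) ?_ hT.le (fun y hy ↦ (hh y (Finset.mem_of_mem_erase hy)).le)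
    (fun y hy ↦ rpow_mul_dualSlope_le hRc hα hxs0 (hmin y (Finset.mem_of_mem_erase hy)))
    hSIR.le
  rw [dualSlope_eq_rpow_mul_min hRc hα hxs0]
  positivity

theorem stmt_4 (Rc α₀ α₁ T : ℝ) (hRc : 0 < Rc) (hα₀ : 0 ≤ α₀) (hα : α₀ ≤ α₁) (hT : 0 < T)
    (Φ : Finset (EuclideanSpace ℝ (Fin 2))) (hΦ : ∀ y ∈ Φ, y ≠ 0)
    (h : EuclideanSpace ℝ (Fin 2) → ℝ) (hh : ∀ y ∈ Φ, 0 < h y)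
    (xs : EuclideanSpace ℝ (Fin 2)) (hxs : xs ∈ Φ) (hmin : ∀ y ∈ Φ, ‖xs‖ ≤ ‖y‖)
    (hSIR : h xs * ‖xs‖ ^ (-α₀) > T * ∑ y ∈ Φ.erase xs, h y * ‖y‖ ^ (-α₀)) :
    h xs * dualSlope Rc α₀ α₁ ‖xs‖ ≥
      T * ∑ y ∈ Φ.erase xs, h y * dualSlope Rc α₀ α₁ ‖y‖ :=
  stmt_4_general Rc α₀ α₁ T hRc hα hT Φ hΦ h hh xs hxs hmin hSIR
end

section
/- Let Φ be a finite set of points in ℝ² \ {0} with positive marks h_x > 0, and let x* be a point of Φ with minimal norm. If h_{x*} l₂(x*) > T · Σ_{y∈Φ\{x*}} h_y l₂(y) for some T > 0, then h_{x*}‖x*‖^{-α₁} ≥ T · Σ_{y∈Φ\{x*}} h_y ‖y‖^{-α₁}. (SIR under the far-field single-slope law is at least the SIR under the dual-slope law.) -/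
open Real
open scoped Classical

lemma dualSlope_pos {Rc α₀ α₁ r : ℝ} (hRc : 0 < Rc) (hr : 0 < r) :
    0 < dualSlope Rc α₀ α₁ r := by
  unfold dualSlope
  split
  · exact Real.rpow_pos_of_pos hr _
  · exact mul_pos (Real.rpow_pos_of_pos hRc _) (Real.rpow_pos_of_pos hr _)

lemma ratio_eq {Rc α₀ α₁ r : ℝ} (hRc : 0 < Rc) (hr : 0 < r) :
    r ^ (-α₁) = dualSlope Rc α₀ α₁ r * (min r Rc) ^ (α₀ - α₁) := by
  unfold dualSlope
  split_ifs with hle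
  · rw [min_eq_left hle, ← Real.rpow_add hr]
    ring_nf
  · push_neg at hle
    rw [min_eq_right hle.le, mul_comm (Rc ^ (α₁ - α₀)), mul_assoc,
      ← Real.rpow_add hRc]
    simp

theorem stmt_5 (Rc α₀ α₁ T : ℝ) (hRc : 0 < Rc) (hα₀ : 0 ≤ α₀) (hα : α₀ ≤ α₁) (hT : 0 < T)
    (Φ : Finset (EuclideanSpace ℝ (Fin 2))) (hΦ : ∀ y ∈ Φ, y ≠ 0)
    (h : EuclideanSpace ℝ (Fin 2) → ℝ) (hh : ∀ y ∈ Φ, 0 < h y)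
    (xs : EuclideanSpace ℝ (Fin 2)) (hxs : xs ∈ Φ) (hmin : ∀ y ∈ Φ, ‖xs‖ ≤ ‖y‖)
    (hSIR : h xs * dualSlope Rc α₀ α₁ ‖xs‖ >
      T * ∑ y ∈ Φ.erase xs, h y * dualSlope Rc α₀ α₁ ‖y‖) :
    h xs * ‖xs‖ ^ (-α₁) ≥ T * ∑ y ∈ Φ.erase xs, h y * ‖y‖ ^ (-α₁) := by
  have hxs0 : (0:ℝ) < ‖xs‖ := norm_pos_iff.mpr (hΦ xs hxs)
  set c : ℝ := (min ‖xs‖ Rc) ^ (α₀ - α₁) with hc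
  have hcpos : 0 < c := Real.rpow_pos_of_pos (lt_min hxs0 hRc) _
  -- pointwise bound
  have hpt : ∀ y ∈ Φ.erase xs, h y * ‖y‖ ^ (-α₁) ≤ (h y * dualSlope Rc α₀ α₁ ‖y‖) * c := by
    intro y hy
    have hyΦ := Finset.mem_of_mem_erase hy
    have hy0 : (0:ℝ) < ‖y‖ := norm_pos_iff.mpr (hΦ y hyΦ)
    have hrle : (min ‖y‖ Rc) ^ (α₀ - α₁) ≤ c := by
      apply Real.rpow_le_rpow_of_nonpos (lt_min hxs0 hRc)
      · exact min_le_min (hmin y hyΦ) le_rfl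
      · linarith
    calc h y * ‖y‖ ^ (-α₁)
        = (h y * dualSlope Rc α₀ α₁ ‖y‖) * (min ‖y‖ Rc) ^ (α₀ - α₁) := by
          rw [ratio_eq hRc hy0]; ring
      _ ≤ (h y * dualSlope Rc α₀ α₁ ‖y‖) * c := by
          apply mul_le_mul_of_nonneg_left hrle
          exact mul_nonneg (hh y hyΦ).le (dualSlope_pos hRc hy0).le
  have hsum : ∑ y ∈ Φ.erase xs, h y * ‖y‖ ^ (-α₁) ≤
      (∑ y ∈ Φ.erase xs, h y * dualSlope Rc α₀ α₁ ‖y‖) * c := by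
    rw [Finset.sum_mul]
    exact Finset.sum_le_sum hpt
  have key : T * ((∑ y ∈ Φ.erase xs, h y * dualSlope Rc α₀ α₁ ‖y‖) * c) ≤
      h xs * dualSlope Rc α₀ α₁ ‖xs‖ * c := by
    rw [← mul_assoc]
    exact mul_le_mul_of_nonneg_right hSIR.le hcpos.le
  have hxeq : h xs * dualSlope Rc α₀ α₁ ‖xs‖ * c = h xs * ‖xs‖ ^ (-α₁) := by
    rw [ratio_eq hRc hxs0, ← hc]; ring
  calc T * ∑ y ∈ Φ.erase xs, h y * ‖y‖ ^ (-α₁)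
      ≤ T * ((∑ y ∈ Φ.erase xs, h y * dualSlope Rc α₀ α₁ ‖y‖) * c) := by
        exact mul_le_mul_of_nonneg_left hsum hT.le
    _ ≤ h xs * ‖xs‖ ^ (-α₁) := hxeq ▸ key
end

section
/- For all α₀ with 0 ≤ α₀ ≤ α₁ and any x, y with 0 < ‖x‖ ≤ ‖y‖: ‖x‖^{-α₁}/‖y‖^{-α₁} ≥ l₂(x)/l₂(y) ≥ ‖x‖^{-α₀}/‖y‖^{-α₀}, i.e., the path loss ratio (signal-to-single-interferer ratio) under the dual-slope law lies between the ratios under the two single-slope laws. -/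
open Real

lemma ratio_mono {a b α β : ℝ} (ha : 0 < a) (hab : a ≤ b) (hαβ : α ≤ β) :
    a ^ (-α) / b ^ (-α) ≤ a ^ (-β) / b ^ (-β) := by
  have hb : 0 < b := ha.trans_le hab
  rw [← Real.div_rpow ha.le hb.le, ← Real.div_rpow ha.le hb.le]
  exact Real.rpow_le_rpow_of_exponent_ge (div_pos ha hb)
    ((div_le_one hb).2 hab) (neg_le_neg hαβ)

lemma dual_key (Rc α₀ α₁ a b : ℝ) (hRc : 0 < Rc) (hα₀ : 0 ≤ α₀) (hα : α₀ ≤ α₁)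
    (ha : 0 < a) (hab : a ≤ b) :
    a ^ (-α₀) / b ^ (-α₀) ≤ dualSlope Rc α₀ α₁ a / dualSlope Rc α₀ α₁ b ∧
      dualSlope Rc α₀ α₁ a / dualSlope Rc α₀ α₁ b ≤ a ^ (-α₁) / b ^ (-α₁) := by
  have hb : 0 < b := ha.trans_le hab
  have hd : 0 ≤ α₁ - α₀ := by linarith
  unfold dualSlope
  by_cases h1 : b ≤ Rc
  · have h2 : a ≤ Rc := hab.trans h1
    rw [if_pos h1, if_pos h2]
    exact ⟨le_refl _, ratio_mono ha hab hα⟩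
  · push_neg at h1
    rw [if_neg h1.not_ge]
    by_cases h2 : a ≤ Rc
    · rw [if_pos h2]
      constructor
      · apply div_le_div_of_nonneg_left (Real.rpow_pos_of_pos ha _).le
          (by positivity)
        calc Rc ^ (α₁ - α₀) * b ^ (-α₁) ≤ b ^ (α₁ - α₀) * b ^ (-α₁) := by
              apply mul_le_mul_of_nonneg_right
                (Real.rpow_le_rpow hRc.le h1.le hd)
                (Real.rpow_pos_of_pos hb _).le
          _ = b ^ (-α₀) := by
              rw [← Real.rpow_add hb]; ring_nf
      · rw [← div_div]
        apply (div_le_div_iff_of_pos_right (Real.rpow_pos_of_pos hb _)).2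
        rw [div_le_iff₀ (by positivity)]
        calc a ^ (-α₀) = a ^ (-α₁) * a ^ (α₁ - α₀) := by
              rw [← Real.rpow_add ha]; ring_nf
          _ ≤ a ^ (-α₁) * Rc ^ (α₁ - α₀) := by
              apply mul_le_mul_of_nonneg_left
                (Real.rpow_le_rpow ha.le h2 hd)
                (Real.rpow_pos_of_pos ha _).le
    · rw [if_neg h2]
      rw [mul_div_mul_left _ _ (ne_of_gt (Real.rpow_pos_of_pos hRc _))]
      push_neg at h2
      exact ⟨ratio_mono ha hab hα, le_refl _⟩

theorem stmt_7 (Rc α₀ α₁ : ℝ) (hRc : 0 < Rc) (hα₀ : 0 ≤ α₀) (hα : α₀ ≤ α₁)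
    (x y : EuclideanSpace ℝ (Fin 2)) (hx : 0 < ‖x‖) (hxy : ‖x‖ ≤ ‖y‖) :
    ‖x‖ ^ (-α₀) / ‖y‖ ^ (-α₀) ≤ dualSlope Rc α₀ α₁ ‖x‖ / dualSlope Rc α₀ α₁ ‖y‖ ∧
      dualSlope Rc α₀ α₁ ‖x‖ / dualSlope Rc α₀ α₁ ‖y‖ ≤ ‖x‖ ^ (-α₁) / ‖y‖ ^ (-α₁) := by
  exact dual_key Rc α₀ α₁ ‖x‖ ‖y‖ hRc hα₀ hα hx hxy
end

section
/- Fix T > 0 and 0 ≤ α₀ < 2. Define g(x) = 1/(x e (1 + ∫₁^{1/x} T/(T + t^{α₀/2}) dt)) for x ∈ (0,1). Then g is integrable on (0,1). -/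
/-!
Write `φ(t) = T / (T + t^β)` with `β = α₀/2 ∈ [0, 1)`. Since `φ` is antitone and
`φ ≤ 1`, `1 + ∫₁ᵘ φ ≥ φ(u) + (u - 1) φ(u) = u φ(u)`. With `u = 1/x` the integrand is
therefore at most `1 / (e φ(1/x)) = (T + x^(-β)) / (e T)`, which is integrable on `(0, 1)`
because `-β > -1`.
-/

open Real MeasureTheory Set

lemma mul_le_one_add_integral_of_antitoneOn {f : ℝ → ℝ} {u : ℝ} (hu : 1 ≤ u)
    (hf : AntitoneOn f (Icc 1 u)) (hfu : f u ≤ 1) (hfi : IntervalIntegrable f volume 1 u) :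
    u * f u ≤ 1 + ∫ t in (1 : ℝ)..u, f t := by
  have hconst : (u - 1) * f u ≤ ∫ t in (1 : ℝ)..u, f t := by
    simpa using intervalIntegral.integral_mono_on hu intervalIntegrable_const hfi
      fun t ht => hf ht ⟨hu, le_rfl⟩ ht.2
  linarith

lemma continuousOn_primitive_of_isOpen {f : ℝ → ℝ} {s : Set ℝ} {a : ℝ} (hs : IsOpen s)
    (hs' : s.OrdConnected) (ha : a ∈ s) (hf : ContinuousOn f s) :
    ContinuousOn (fun u => ∫ t in a..u, f t) s := by
  intro b hb
  have hint : IntervalIntegrable f volume a b :=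
    (hf.mono (hs'.uIcc_subset ha hb)).intervalIntegrable
  exact (intervalIntegral.integral_hasDerivAt_right hint (hf.stronglyMeasurableAtFilter hs b hb)
    (hf.continuousAt (hs.mem_nhds hb))).continuousAt.continuousWithinAt

section

variable {T β : ℝ}

lemma div_add_rpow_le_one (hT : 0 < T) {t : ℝ} (ht : 0 < t) : T / (T + t ^ β) ≤ 1 :=
  (div_le_one (by positivity)).2 (le_add_of_nonneg_right (rpow_pos_of_pos ht β).le)

lemma antitoneOn_div_add_rpow (hT : 0 < T) (hβ : 0 ≤ β) :
    AntitoneOn (fun t : ℝ => T / (T + t ^ β)) (Ioi 0) := fun s hs t _ hst =>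
  div_le_div_of_nonneg_left hT.le (by have := rpow_pos_of_pos hs β; positivity)
    (add_le_add_right (rpow_le_rpow (le_of_lt hs) hst hβ) T)

lemma continuousOn_div_add_rpow (hT : 0 < T) :
    ContinuousOn (fun t : ℝ => T / (T + t ^ β)) (Ioi 0) := by
  refine continuousOn_const.div (continuousOn_const.add fun t ht => ?_) fun t ht => ?_
  · exact (continuousAt_rpow_const t β (Or.inl (ne_of_gt ht))).continuousWithinAt
  · exact (add_pos_of_pos_of_nonneg hT (rpow_pos_of_pos ht β).le).ne'

lemma exp_one_mul_div_add_rpow_neg_le (hT : 0 < T) (hβ : 0 ≤ β) {x : ℝ} (hx : 0 < x)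
    (hx1 : x ≤ 1) :
    exp 1 * T / (T + x ^ (-β)) ≤
      x * exp 1 * (1 + ∫ t in (1 : ℝ)..(1 / x), T / (T + t ^ β)) := by
  have hu : 1 ≤ 1 / x := by rwa [le_div_iff₀ hx, one_mul]
  have hIcc : Icc 1 (1 / x) ⊆ Ioi 0 := fun t ht => one_pos.trans_le ht.1
  have key := mul_le_one_add_integral_of_antitoneOn hu
    ((antitoneOn_div_add_rpow hT hβ).mono hIcc) (div_add_rpow_le_one hT (one_pos.trans_le hu))
    (((continuousOn_div_add_rpow hT).mono (by rwa [uIcc_of_le hu])).intervalIntegrable)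
  have hrpow : (1 / x) ^ β = x ^ (-β) := by rw [one_div, inv_rpow hx.le, rpow_neg hx.le]
  rw [hrpow] at key
  calc exp 1 * T / (T + x ^ (-β)) = x * exp 1 * (1 / x * (T / (T + x ^ (-β)))) := by
        field_simp
    _ ≤ _ := mul_le_mul_of_nonneg_left key (by positivity)

end

theorem stmt_14 (T α₀ : ℝ) (hT : 0 < T) (hα₀ : 0 ≤ α₀) (hα₀2 : α₀ < 2) :
    IntegrableOn
      (fun x : ℝ =>
        1 / (x * Real.exp 1 * (1 + ∫ t in (1:ℝ)..(1 / x), T / (T + t ^ (α₀ / 2)))))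
      (Set.Ioo 0 1) volume := by
  have hβ : 0 ≤ α₀ / 2 := by positivity
  have hlower (x : ℝ) (hx : x ∈ Ioo 0 1) := exp_one_mul_div_add_rpow_neg_le hT hβ hx.1 hx.2.le
  have hlower_pos (x : ℝ) (hx : x ∈ Ioo 0 1) : 0 < exp 1 * T / (T + x ^ (-(α₀ / 2))) := by
    have := rpow_pos_of_pos hx.1 (-(α₀ / 2))
    positivity
  have hdom : IntegrableOn (fun x : ℝ => (T + x ^ (-(α₀ / 2))) / (exp 1 * T)) (Ioo 0 1) :=
    (integrableOn_const measure_Ioo_lt_top.ne |>.add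
      ((intervalIntegral.integrableOn_Ioo_rpow_iff one_pos).2 (by linarith))).div_const _
  have hcont : ContinuousOn (fun x : ℝ =>
      1 / (x * exp 1 * (1 + ∫ t in (1:ℝ)..(1 / x), T / (T + t ^ (α₀ / 2))))) (Ioo 0 1) := by
    refine continuousOn_const.div ((continuousOn_id.mul continuousOn_const).mul
      (continuousOn_const.add ?_)) fun x hx => ((hlower_pos x hx).trans_le (hlower x hx)).ne'
    exact (continuousOn_primitive_of_isOpen isOpen_Ioi ordConnected_Ioi
      (by norm_num : (1:ℝ) ∈ Ioi 0) (continuousOn_div_add_rpow hT)).comp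
      (continuousOn_const.div continuousOn_id fun x hx => hx.1.ne') fun x hx => one_div_pos.2 hx.1
  refine hdom.mono' (hcont.aestronglyMeasurable measurableSet_Ioo)
    ((ae_restrict_iff' measurableSet_Ioo).2 (.of_forall fun x hx => ?_))
  rw [norm_of_nonneg (one_div_pos.2 ((hlower_pos x hx).trans_le (hlower x hx))).le]
  exact (one_div_le_one_div_of_le (hlower_pos x hx) (hlower x hx)).trans_eq (one_div_div _ _)
end

section
/- Fix T > 0 and 0 ≤ α₀ < 1, and let R_c > 0. Define g'(x) = 4/(π R_c² x² (1 + ∫₁^{1/x} T/(T + t^{α₀/2}) dt)²) for x ∈ (0,1). Then g' is integrable on (0,1). -/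
open Real MeasureTheory

theorem stmt_15 (T α₀ Rc : ℝ) (hT : 0 < T) (hα₀ : 0 ≤ α₀) (hα₀1 : α₀ < 1) (hRc : 0 < Rc) :
    IntegrableOn
      (fun x : ℝ =>
        4 / (π * Rc ^ 2 * x ^ 2 * (1 + ∫ t in (1:ℝ)..(1 / x), T / (T + t ^ (α₀ / 2))) ^ 2))
      (Set.Ioo 0 1) volume := by
  set f : ℝ → ℝ := fun t => T / (T + t ^ (α₀ / 2)) with hf
  have hq : (0:ℝ) ≤ α₀ / 2 := by linarith
  have hrpow_nonneg : ∀ t : ℝ, 0 ≤ t ^ (α₀ / 2) := by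
    intro t
    rcases le_or_gt 0 t with ht | ht
    · exact Real.rpow_nonneg ht _
    · rw [Real.rpow_def_of_neg ht]
      have hcos : 0 ≤ Real.cos (α₀ / 2 * π) := by
        apply Real.cos_nonneg_of_mem_Icc
        refine ⟨by nlinarith [Real.pi_pos], by nlinarith [Real.pi_pos]⟩
      positivity
  have hden_pos : ∀ t : ℝ, 0 < T + t ^ (α₀ / 2) := fun t =>
    lt_of_lt_of_le hT (le_add_of_nonneg_right (hrpow_nonneg t))
  have hfcont : Continuous f := by
    apply continuous_const.div
    · exact continuous_const.add (Real.continuous_rpow_const hq)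
    · exact fun t => (hden_pos t).ne'
  have hfnonneg : ∀ t, 0 ≤ f t := fun t => div_nonneg hT.le (hden_pos t).le
  set G : ℝ → ℝ := fun u => ∫ t in (1:ℝ)..u, f t with hG
  have hGcont : Continuous G :=
    intervalIntegral.continuous_primitive (fun a b => hfcont.intervalIntegrable a b) 1
  have hGnonneg : ∀ u, 1 ≤ u → 0 ≤ G u := fun u hu =>
    intervalIntegral.integral_nonneg hu (fun t _ => hfnonneg t)
  -- lower bound constants
  set β : ℝ := 1 - α₀ / 2 with hβ
  have hβpos : 0 < β := by simp [hβ]; linarith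
  set c : ℝ := T / ((T + 1) * β) with hc
  have hcpos : 0 < c := by positivity
  set m : ℝ := min 1 c with hm
  have hmpos : 0 < m := lt_min one_pos hcpos
  -- key lower bound
  have hkey : ∀ y : ℝ, 1 ≤ y → m * y ^ β ≤ 1 + G y := by
    intro y hy
    have h1 : ∫ t in (1:ℝ)..y, (T / (T + 1)) * t ^ (-(α₀ / 2)) ≤ G y := by
      apply intervalIntegral.integral_mono_on hy
      · apply IntervalIntegrable.const_mul
        apply intervalIntegral.intervalIntegrable_rpow'
        linarith
      · exact hfcont.intervalIntegrable _ _
      · intro t ht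
        have ht1 : 1 ≤ t := ht.1
        have htpos : 0 < t := lt_of_lt_of_le one_pos ht1
        have h2 : t ^ (α₀ / 2) * t ^ (-(α₀ / 2)) = 1 := by
          rw [← Real.rpow_add htpos]; simp
        have h3 : T + t ^ (α₀ / 2) ≤ (T + 1) * t ^ (α₀ / 2) := by
          have : (1:ℝ) ≤ t ^ (α₀ / 2) := Real.one_le_rpow ht1 hq
          nlinarith
        have h4 : 0 < t ^ (α₀ / 2) := Real.rpow_pos_of_pos htpos _
        have h5 : 0 < t ^ (-(α₀ / 2)) := Real.rpow_pos_of_pos htpos _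
        show T / (T + 1) * t ^ (-(α₀ / 2)) ≤ T / (T + t ^ (α₀ / 2))
        rw [le_div_iff₀ (hden_pos t)]
        calc T / (T + 1) * t ^ (-(α₀/2)) * (T + t ^ (α₀/2))
            ≤ T / (T + 1) * t ^ (-(α₀/2)) * ((T + 1) * t ^ (α₀/2)) := by
              apply mul_le_mul_of_nonneg_left h3 (by positivity)
          _ = T * (t ^ (α₀/2) * t ^ (-(α₀/2))) := by field_simp
          _ = T := by rw [h2, mul_one]
    have h2 : ∫ t in (1:ℝ)..y, (T / (T + 1)) * t ^ (-(α₀ / 2))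
        = (T / (T + 1)) * ((y ^ β - 1) / β) := by
      rw [intervalIntegral.integral_const_mul, integral_rpow (Or.inl (by linarith)),
        Real.one_rpow, show -(α₀ / 2) + 1 = β by rw [hβ]; ring]
    have hyβ : 1 ≤ y ^ β := Real.one_le_rpow hy hβpos.le
    have : c * (y ^ β - 1) ≤ G y := by
      rw [hc]
      calc T / ((T+1) * β) * (y ^ β - 1) = (T / (T + 1)) * ((y ^ β - 1) / β) := by
            field_simp
            try ring
        _ ≤ G y := h2 ▸ h1
    have hm1 : m ≤ 1 := min_le_left _ _
    have hmc : m ≤ c := min_le_right _ _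
    nlinarith
  -- bound function
  set C : ℝ := 4 / (π * Rc ^ 2 * m ^ 2) with hC
  have hπ := Real.pi_pos
  have hCpos : 0 < C := by positivity
  have hbound : ∀ x ∈ Set.Ioo (0:ℝ) 1,
      4 / (π * Rc ^ 2 * x ^ 2 * (1 + G (1 / x)) ^ 2) ≤ C * x ^ (-α₀) := by
    intro x hx
    obtain ⟨hx0, hx1⟩ := hx
    have hy : 1 ≤ 1 / x := one_le_one_div hx0 hx1.le
    have hk := hkey (1 / x) hy
    have hGpos : 0 < 1 + G (1 / x) := by
      have := hGnonneg (1 / x) hy; linarith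
    have hxβ : (0:ℝ) < (1 / x) ^ β := Real.rpow_pos_of_pos (by positivity) _
    have hD : π * Rc ^ 2 * m ^ 2 * x ^ α₀
        ≤ π * Rc ^ 2 * x ^ 2 * (1 + G (1 / x)) ^ 2 := by
      have hsq : (m * (1/x) ^ β) ^ 2 ≤ (1 + G (1/x)) ^ 2 := by
        apply pow_le_pow_left₀ (by positivity) hk
      have e1 : (1/x) ^ β = x ^ (-β) := by
        rw [one_div, Real.inv_rpow hx0.le, ← Real.rpow_neg hx0.le]
      have hx2 : x ^ 2 * ((1/x) ^ β) ^ 2 = x ^ α₀ := by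
        rw [e1, ← Real.rpow_natCast (x ^ (-β)) 2, ← Real.rpow_mul hx0.le,
          ← Real.rpow_natCast x 2, ← Real.rpow_add hx0]
        congr 1
        push_cast
        rw [hβ]; ring
      calc π * Rc ^ 2 * m ^ 2 * x ^ α₀
          = π * Rc ^ 2 * x ^ 2 * (m * (1/x) ^ β) ^ 2 := by rw [← hx2]; ring
        _ ≤ π * Rc ^ 2 * x ^ 2 * (1 + G (1/x)) ^ 2 := by
            apply mul_le_mul_of_nonneg_left hsq (by positivity)
    have hxα : (0:ℝ) < x ^ α₀ := Real.rpow_pos_of_pos hx0 _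
    calc 4 / (π * Rc ^ 2 * x ^ 2 * (1 + G (1 / x)) ^ 2)
        ≤ 4 / (π * Rc ^ 2 * m ^ 2 * x ^ α₀) := by
          apply div_le_div_of_nonneg_left (by norm_num) (by positivity) hD
      _ = C * x ^ (-α₀) := by
          rw [hC, Real.rpow_neg hx0.le]
          field_simp
  -- integrable bound
  have hbint : IntegrableOn (fun x : ℝ => C * x ^ (-α₀)) (Set.Ioo 0 1) volume := by
    have : IntervalIntegrable (fun x : ℝ => x ^ (-α₀)) volume 0 1 :=
      intervalIntegral.intervalIntegrable_rpow' (by linarith)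
    rw [intervalIntegrable_iff_integrableOn_Ioo_of_le (by norm_num)] at this
    exact this.const_mul C
  -- measurability
  have hmeas : ContinuousOn
      (fun x : ℝ => 4 / (π * Rc ^ 2 * x ^ 2 * (1 + G (1 / x)) ^ 2)) (Set.Ioo 0 1) := by
    apply ContinuousOn.div continuousOn_const
    · apply ContinuousOn.mul
      · exact (continuousOn_const.mul (continuous_pow 2).continuousOn)
      · apply ContinuousOn.pow
        apply continuousOn_const.add
        exact hGcont.comp_continuousOn (continuousOn_const.div continuousOn_id
          (fun x hx => ne_of_gt hx.1))
    · intro x hx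
      have hy : 1 ≤ 1 / x := one_le_one_div hx.1 hx.2.le
      have := hGnonneg (1 / x) hy
      have hx0 := hx.1
      positivity
  apply Integrable.mono' hbint (hmeas.aestronglyMeasurable measurableSet_Ioo)
  · filter_upwards [ae_restrict_mem measurableSet_Ioo] with x hx
    have h0 : 0 ≤ 4 / (π * Rc ^ 2 * x ^ 2 * (1 + G (1 / x)) ^ 2) := by
      have hy : 1 ≤ 1 / x := one_le_one_div hx.1 hx.2.le
      have := hGnonneg (1 / x) hy
      have hx0 := hx.1
      positivity
    rw [Real.norm_eq_abs, abs_of_nonneg h0]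
    exact hbound x hx
end

section
/- For λ > 0, T > 0, R_c > 0, and 1 < α₀ < 2 < α₁, the quantity P(λ) := λ π R_c² ∫₀¹ exp(−λ π R_c² (1 − 2T/(2−α₀)) x) · exp(−λ π R_c² (2T(α₁−α₀)/((2−α₀)(α₁−2))) x^{α₀/2}) dx satisfies: if additionally T ≥ 1 − α₀/2, then P(λ) ≥ δ₀ (λπR_c²)^{1−δ₀} c^{−δ₀} γ(δ₀, λπR_c² c), where δ₀ = 2/α₀, c = 2T(α₁−α₀)/((2−α₀)(α₁−2)) and γ is the lower incomplete gamma function. Consequently λ·P(λ) = Ω(λ^{2−2/α₀}) as λ → ∞. -/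
open Real MeasureTheory Filter

/-- Lower incomplete gamma function `γ(s, z) = ∫₀^z t^{s-1} e^{-t} dt`. -/
noncomputable def lowerGamma (s z : ℝ) : ℝ := ∫ t in (0:ℝ)..z, t ^ (s - 1) * Real.exp (-t)

/-- The lower-bound integral `P(λ)` for the SIR coverage probability. -/
noncomputable def Pint (T Rc α₀ α₁ lam : ℝ) : ℝ :=
  lam * π * Rc ^ 2 *
    ∫ x in (0:ℝ)..1,
      Real.exp (-(lam * π * Rc ^ 2 * (1 - 2 * T / (2 - α₀)) * x)) *
        Real.exp (-(lam * π * Rc ^ 2 *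
          (2 * T * (α₁ - α₀) / ((2 - α₀) * (α₁ - 2))) * x ^ (α₀ / 2)))

/-!
When `T ≥ 1 - α₀ / 2` the coefficient of `x` in the first exponential of `P(λ)` is nonpositive,
so that factor is at least `1` and can be dropped. With `z = λπR_c²c` and `δ₀ = 2 / α₀`, the
substitution `x = (u / z) ^ δ₀` turns `∫₀¹ exp (-z x ^ (α₀ / 2)) dx` into
`δ₀ z ^ (-δ₀) γ(δ₀, z)`. For the growth rate, `γ(δ₀, ·)` is increasing, so once `z ≥ 1` the
factor `γ(δ₀, z)` is at least `γ(δ₀, 1) > 0`, which leaves `λ P(λ) ≥ C λ ^ (2 - δ₀)`.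
-/

section LowerGamma

variable {s : ℝ}

lemma continuous_rpow_mul_exp_neg (hs : 1 ≤ s) :
    Continuous fun t : ℝ => t ^ (s - 1) * exp (-t) :=
  (continuous_id.rpow_const fun _ => Or.inr (by linarith)).mul (continuous_exp.comp continuous_neg)

lemma lowerGamma_le_lowerGamma (hs : 1 ≤ s) {a b : ℝ} (ha : 0 ≤ a) (hab : a ≤ b) :
    lowerGamma s a ≤ lowerGamma s b := by
  have hint := (continuous_rpow_mul_exp_neg hs).intervalIntegrable (μ := volume)
  have htail : 0 ≤ ∫ t in a..b, t ^ (s - 1) * exp (-t) :=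
    intervalIntegral.integral_nonneg hab fun t ht =>
      mul_nonneg (rpow_nonneg (ha.trans ht.1) _) (exp_nonneg _)
  rw [lowerGamma, lowerGamma, ← intervalIntegral.integral_add_adjacent_intervals (hint 0 a) (hint a b)]
  linarith

lemma lowerGamma_pos (hs : 1 ≤ s) {z : ℝ} (hz : 0 < z) : 0 < lowerGamma s z :=
  intervalIntegral.intervalIntegral_pos_of_pos_on
    ((continuous_rpow_mul_exp_neg hs).intervalIntegrable 0 z)
    (fun _ ht => mul_pos (rpow_pos_of_pos ht.1 _) (exp_pos _)) hz

end LowerGamma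

/-- Substituting `x = (u / z) ^ s`. -/
lemma integral_exp_neg_mul_rpow_inv {s z : ℝ} (hs : 1 ≤ s) (hz : 0 < z) :
    ∫ x in (0:ℝ)..1, exp (-(z * x ^ s⁻¹)) = s * z ^ (-s) * lowerGamma s z := by
  have hs0 : 0 < s := by linarith
  have hderiv : ∀ u ∈ Set.uIcc 0 z,
      HasDerivAt (fun u => (u / z) ^ s) (s * (u / z) ^ (s - 1) * z⁻¹) u := fun u _ => by
    simpa [div_eq_mul_inv, mul_comm, mul_assoc, mul_left_comm] using
      ((hasDerivAt_id u).div_const z).rpow_const (p := s) (Or.inr hs)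
  have hcont : ContinuousOn (fun u => s * (u / z) ^ (s - 1) * z⁻¹) (Set.uIcc 0 z) :=
    (continuous_const.mul ((continuous_id.div_const z).rpow_const
      fun _ => Or.inr (by linarith))).mul continuous_const |>.continuousOn
  have hg : Continuous fun x : ℝ => exp (-(z * x ^ s⁻¹)) :=
    continuous_exp.comp (continuous_const.mul
      (continuous_id.rpow_const fun _ => Or.inr (by positivity))).neg
  have hsubst := intervalIntegral.integral_comp_mul_deriv hderiv hcont hg
  rw [zero_div, zero_rpow hs0.ne', div_self hz.ne', one_rpow] at hsubst
  rw [← hsubst, lowerGamma, ← intervalIntegral.integral_const_mul]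
  refine intervalIntegral.integral_congr fun u hu => ?_
  have hu : 0 ≤ u := by simpa [hz.le] using hu.1
  have hpow : ((u / z) ^ s) ^ s⁻¹ = u / z := by
    rw [← rpow_mul (div_nonneg hu hz.le), mul_inv_cancel₀ hs0.ne', rpow_one]
  have hz_pow : z ^ (-s) = (z ^ (s - 1) * z)⁻¹ := by
    rw [rpow_neg hz.le, ← rpow_add_one hz.ne', sub_add_cancel]
  rw [Function.comp_apply, hpow, mul_div_cancel₀ u hz.ne', div_rpow hu hz.le, hz_pow]
  field_simp

lemma integral_exp_neg_mul_rpow_le {a b p : ℝ} (ha : a ≤ 0) (hp : 0 ≤ p) :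
    ∫ x in (0:ℝ)..1, exp (-(b * x ^ p)) ≤
      ∫ x in (0:ℝ)..1, exp (-(a * x)) * exp (-(b * x ^ p)) := by
  have hg : Continuous fun x : ℝ => exp (-(b * x ^ p)) :=
    continuous_exp.comp (continuous_const.mul (continuous_id.rpow_const fun _ => Or.inr hp)).neg
  refine intervalIntegral.integral_mono_on zero_le_one (hg.intervalIntegrable 0 1)
    (((continuous_exp.comp (continuous_const.mul continuous_id).neg).mul hg).intervalIntegrable 0 1)
    fun x hx => le_mul_of_one_le_left (exp_nonneg _) (one_le_exp ?_)
  nlinarith [hx.1]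

lemma lowerGamma_le_mul_integral {A a c s : ℝ} (hA : 0 < A) (ha : a ≤ 0) (hc : 0 < c)
    (hs : 1 ≤ s) :
    s * A ^ (1 - s) * c ^ (-s) * lowerGamma s (A * c) ≤
      A * ∫ x in (0:ℝ)..1, exp (-(a * x)) * exp (-(A * c * x ^ s⁻¹)) := by
  have hsplit : s * A ^ (1 - s) * c ^ (-s) = A * (s * (A * c) ^ (-s)) := by
    rw [mul_rpow hA.le hc.le, sub_eq_add_neg, rpow_add hA, rpow_one]
    ring
  rw [hsplit, mul_assoc, ← integral_exp_neg_mul_rpow_inv hs (mul_pos hA hc)]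
  exact mul_le_mul_of_nonneg_left
    (integral_exp_neg_mul_rpow_le ha (inv_nonneg.mpr (by linarith))) hA.le

lemma rpow_two_sub_le_mul_lowerGamma {B c s lam : ℝ} (hB : 0 < B) (hc : 0 < c) (hs : 1 ≤ s)
    (hlam : 0 < lam) (hlarge : 1 ≤ lam * B * c) :
    s * B ^ (1 - s) * c ^ (-s) * lowerGamma s 1 * lam ^ (2 - s) ≤
      lam * (s * (lam * B) ^ (1 - s) * c ^ (-s) * lowerGamma s (lam * B * c)) := by
  have hlam_pow : lam * lam ^ (1 - s) = lam ^ (2 - s) := by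
    rw [show 2 - s = 1 + (1 - s) by ring, rpow_add hlam, rpow_one]
  rw [mul_rpow hlam.le hB.le, ← hlam_pow]
  calc s * B ^ (1 - s) * c ^ (-s) * lowerGamma s 1 * (lam * lam ^ (1 - s))
      = s * B ^ (1 - s) * c ^ (-s) * (lam * lam ^ (1 - s)) * lowerGamma s 1 := by ring
    _ ≤ s * B ^ (1 - s) * c ^ (-s) * (lam * lam ^ (1 - s)) * lowerGamma s (lam * B * c) := by
      gcongr
      exact lowerGamma_le_lowerGamma hs zero_le_one hlarge
    _ = lam * (s * (lam ^ (1 - s) * B ^ (1 - s)) * c ^ (-s) * lowerGamma s (lam * B * c)) := by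
      ring

theorem stmt_17_general (T Rc α₀ α₁ : ℝ) (hRc : 0 < Rc)
    (hα₀1 : 1 < α₀) (hα₀2 : α₀ < 2) (hα₁ : 2 < α₁) :
    (∀ lam : ℝ, 0 < lam → T ≥ 1 - α₀ / 2 →
      Pint T Rc α₀ α₁ lam ≥
        (2 / α₀) * (lam * π * Rc ^ 2) ^ (1 - 2 / α₀) *
          (2 * T * (α₁ - α₀) / ((2 - α₀) * (α₁ - 2))) ^ (-(2 / α₀)) *
          lowerGamma (2 / α₀)
            (lam * π * Rc ^ 2 * (2 * T * (α₁ - α₀) / ((2 - α₀) * (α₁ - 2))))) ∧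
    (T ≥ 1 - α₀ / 2 →
      ∃ C > (0:ℝ), ∃ Λ : ℝ, ∀ lam ≥ Λ, 0 < lam →
        lam * Pint T Rc α₀ α₁ lam ≥ C * lam ^ (2 - 2 / α₀)) := by
  set c := 2 * T * (α₁ - α₀) / ((2 - α₀) * (α₁ - 2))
  set δ := 2 / α₀
  have hδ : 1 ≤ δ := by rw [le_div_iff₀ (by linarith)]; linarith
  have hc (hT : T ≥ 1 - α₀ / 2) : 0 < c :=
    div_pos (mul_pos (by linarith) (by linarith)) (mul_pos (by linarith) (by linarith))
  have hbound (lam : ℝ) (hlam : 0 < lam) (hT : T ≥ 1 - α₀ / 2) :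
      Pint T Rc α₀ α₁ lam ≥ δ * (lam * π * Rc ^ 2) ^ (1 - δ) * c ^ (-δ) *
        lowerGamma δ (lam * π * Rc ^ 2 * c) := by
    have ha : 1 - 2 * T / (2 - α₀) ≤ 0 := by
      rw [sub_nonpos, le_div_iff₀ (by linarith)]; linarith
    rw [ge_iff_le, Pint]
    simpa only [δ, inv_div] using lowerGamma_le_mul_integral (by positivity)
      (mul_nonpos_of_nonneg_of_nonpos (by positivity) ha) (hc hT) hδ
  refine ⟨hbound, fun hT => ?_⟩
  have hcT := hc hT
  have hB : 0 < π * Rc ^ 2 := by positivity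
  refine ⟨δ * (π * Rc ^ 2) ^ (1 - δ) * c ^ (-δ) * lowerGamma δ 1,
    by have := lowerGamma_pos hδ one_pos; positivity, (π * Rc ^ 2 * c)⁻¹, fun lam hΛ hlam => ?_⟩
  have hlarge : 1 ≤ lam * (π * Rc ^ 2) * c := by
    rw [mul_assoc, ← inv_le_iff_one_le_mul₀ (mul_pos hB hcT)]; exact hΛ
  calc lam * Pint T Rc α₀ α₁ lam
      ≥ lam * (δ * (lam * (π * Rc ^ 2)) ^ (1 - δ) * c ^ (-δ) *
          lowerGamma δ (lam * (π * Rc ^ 2) * c)) := by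
        simpa only [mul_assoc] using mul_le_mul_of_nonneg_left (hbound lam hlam hT) hlam.le
    _ ≥ _ := rpow_two_sub_le_mul_lowerGamma hB hcT hδ hlam hlarge

theorem stmt_17 (T Rc α₀ α₁ : ℝ) (hT : 0 < T) (hRc : 0 < Rc)
    (hα₀1 : 1 < α₀) (hα₀2 : α₀ < 2) (hα₁ : 2 < α₁) :
    (∀ lam : ℝ, 0 < lam → T ≥ 1 - α₀ / 2 →
      Pint T Rc α₀ α₁ lam ≥
        (2 / α₀) * (lam * π * Rc ^ 2) ^ (1 - 2 / α₀) *
          (2 * T * (α₁ - α₀) / ((2 - α₀) * (α₁ - 2))) ^ (-(2 / α₀)) *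
          lowerGamma (2 / α₀)
            (lam * π * Rc ^ 2 * (2 * T * (α₁ - α₀) / ((2 - α₀) * (α₁ - 2))))) ∧
    (T ≥ 1 - α₀ / 2 →
      ∃ C > (0:ℝ), ∃ Λ : ℝ, ∀ lam ≥ Λ, 0 < lam →
        lam * Pint T Rc α₀ α₁ lam ≥ C * lam ^ (2 - 2 / α₀)) :=
  stmt_17_general T Rc α₀ α₁ hRc hα₀1 hα₀2 hα₁
end
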